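/- For the asymmetric random walk with 0 < q < p, p + q = 1, let k ≥ 1 and 0 < α < α₁ < α₂ < ⋯ < α_k < 1. Then lim_{N→∞} P_{⌊αN⌋}( ∩_{i=1}^k {G(⌊α_i N⌋) ≡ 1 mod 2} ) = 1/(2 − (p − q))^k; that is, the parities at the sites ⌊α_i N⌋ converge to i.i.d. Bernoulli variables with success probability (2 − (p − q))^{−1}. -/

import Mathlib

open Filter Topology

/-- Position of the nearest-neighbor walk after the steps `w` (`true` = one step right,
`false` = one step left), started from `x`. -/
def walkPos (x : ℤ) (w : List Bool) : ℤ :=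
  x + (w.count true : ℤ) - (w.count false : ℤ)

/-- `w` is the step sequence of a trajectory on `{0, 1, …, N}` started at `x` and run
exactly until the exit time `τ_N = T_0 ∧ T_N`: all positions strictly before the last
step lie strictly inside `(0, N)`, and the final position is `0` or `N`. -/
def IsExitPath (N : ℕ) (x : ℤ) (w : List Bool) : Prop :=
  (∀ k < w.length, 0 < walkPos x (w.take k) ∧ walkPos x (w.take k) < (N : ℤ)) ∧
    (walkPos x w = 0 ∨ walkPos x w = (N : ℤ))

/-- Probability weight of the step sequence `w` when each step goes right with
probability `p` and left with probability `1 - p`, independently. -/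
noncomputable def wt (p : ℝ) (w : List Bool) : ℝ :=
  p ^ w.count true * (1 - p) ^ w.count false

/-- `prob N p x S` is the probability, for the walk on `{0, …, N}` with right-step
probability `p` started at `x` and stopped at the exit time `τ_N`, that its stopped
trajectory (recorded as the step sequence up to time `τ_N`) satisfies `S`. -/
noncomputable def prob (N : ℕ) (p : ℝ) (x : ℤ) (S : List Bool → Prop) : ℝ :=
  ∑' w : List Bool, Set.indicator {w | IsExitPath N x w ∧ S w} (wt p) w

/-- Expectation of `f` of the stopped trajectory for the walk started at `x`. -/
noncomputable def expect (N : ℕ) (p : ℝ) (x : ℤ) (f : List Bool → ℝ) : ℝ :=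
  ∑' w : List Bool, Set.indicator {w | IsExitPath N x w} (fun w => wt p w * f w) w

/-- Probability for the walk whose starting point is uniformly distributed on
`{0, 1, …, N}`; the event `S` may depend on the starting point. -/
noncomputable def probUniform (N : ℕ) (p : ℝ) (S : ℤ → List Bool → Prop) : ℝ :=
  (∑ x ∈ Finset.range (N + 1), prob N p (x : ℤ) (S (x : ℤ))) / (N + 1)

/-- The set of sites visited by the stopped walk up to time `τ_N` (time `0` included). -/
def rangeSet (x : ℤ) (w : List Bool) : Finset ℤ :=
  (Finset.range (w.length + 1)).image fun k => walkPos x (w.take k)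

/-- The range `R_N`: the number of distinct sites visited up to the exit time. -/
def rangeCount (x : ℤ) (w : List Bool) : ℕ := (rangeSet x w).card

/-- The local time `G(y) = Σ_{k=0}^{τ_N} 1_{X_k = y}` of the stopped trajectory `w`. -/
def localTime (x y : ℤ) (w : List Bool) : ℕ :=
  ((Finset.range (w.length + 1)).filter fun k => walkPos x (w.take k) = y).card

/-- The event `T_y < τ_N`: the walk started at `x` visits `y` at some time
`k ≥ 1` strictly before the end of the stopped trajectory `w`. -/
def hitsBefore (x y : ℤ) (w : List Bool) : Prop :=
  ∃ k, 1 ≤ k ∧ k < w.length ∧ walkPos x (w.take k) = y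

/-!
Fix the parities `ε` to be seen at the sites. As a function of the starting point, the
probability of seeing them is harmonic for the walk away from the sites, so between two
consecutive sites it is an affine function of `(q/p)^x`; at a site the first step flips the bit
of that site. The gaps between sites grow linearly, so `(q/p)^gap → 0`, and the values `V_i` at
the sites satisfy, up to vanishing errors, `V_i(ε) = 2q V_i(ε') + (p - q) V_{i+1}(ε')`, where
`ε'` is `ε` with bit `i` flipped: from a site the walk returns to it with probability `2q` (a left
step always comes back, a right step with probability `q/p`), and otherwise moves on to the next
site for good. Solving these two-by-two systems downwards from `N` gives independent parities,
each odd with probability `1 / (1 + 2q) = 1 / (2 - (p - q))`.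
-/

section Walk

variable {N : ℕ} {p : ℝ} {x y : ℤ}

@[simp] lemma walkPos_nil (x : ℤ) : walkPos x [] = x := by simp [walkPos]

lemma walkPos_cons (x : ℤ) (b : Bool) (w : List Bool) :
    walkPos x (b :: w) = walkPos (if b then x + 1 else x - 1) w := by
  cases b <;> simp [walkPos] <;> ring

@[simp] lemma wt_nil (p : ℝ) : wt p [] = 1 := by simp [wt]

lemma wt_cons (p : ℝ) (b : Bool) (w : List Bool) :
    wt p (b :: w) = (if b then p else 1 - p) * wt p w := by
  cases b <;> simp [wt, pow_succ] <;> ring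

lemma wt_nonneg (hp0 : 0 ≤ p) (hp1 : p ≤ 1) (w : List Bool) : 0 ≤ wt p w :=
  mul_nonneg (pow_nonneg hp0 _) (pow_nonneg (sub_nonneg.2 hp1) _)

lemma localTime_nil (x y : ℤ) : localTime x y [] = if x = y then 1 else 0 := by
  by_cases h : x = y <;> simp [localTime, Finset.range_one, h]

lemma localTime_cons (x y : ℤ) (b : Bool) (w : List Bool) :
    localTime x y (b :: w) =
      (if x = y then 1 else 0) + localTime (if b then x + 1 else x - 1) y w := by
  simp only [localTime, Finset.card_filter, List.length_cons]
  rw [Finset.sum_range_succ']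
  simp [List.take_succ_cons, walkPos_cons, add_comm]

lemma isExitPath_nil : IsExitPath N x [] ↔ x = 0 ∨ x = N := by simp [IsExitPath]

lemma IsExitPath.interior {b : Bool} {w : List Bool} (h : IsExitPath N x (b :: w)) :
    0 < x ∧ x < N := by
  simpa using h.1 0 (by simp)

lemma isExitPath_cons (hx0 : 0 < x) (hxN : x < N) (b : Bool) (w : List Bool) :
    IsExitPath N x (b :: w) ↔ IsExitPath N (if b then x + 1 else x - 1) w := by
  simp only [IsExitPath, walkPos_cons, List.length_cons]
  refine and_congr_left fun _ => ⟨fun h k hk => ?_, fun h k hk => ?_⟩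
  · simpa [List.take_succ_cons, walkPos_cons] using h (k + 1) (by omega)
  · cases k with
    | zero => simpa using ⟨hx0, hxN⟩
    | succ k => simpa [List.take_succ_cons, walkPos_cons] using h k (by omega)

lemma IsExitPath.eq_of_prefix {v w : List Bool} (hv : IsExitPath N x v) (hw : IsExitPath N x w)
    (hvw : v <+: w) : v = w := by
  by_contra hne
  have hlt : v.length < w.length := lt_of_le_of_ne hvw.length_le fun h => hne (hvw.eq_of_length h)
  have := hw.1 v.length hlt
  rw [← List.prefix_iff_eq_take.1 hvw] at this
  rcases hv.2 with h | h <;> omega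

end Walk

lemma Finset.sum_eq_sum_preimage_cons {α M : Type*} [Fintype α] [AddCommMonoid M]
    (S : Finset (List α)) (hS : [] ∉ S) (g : List α → M) :
    ∑ w ∈ S, g w = ∑ a, ∑ t ∈ S.preimage (a :: ·) List.cons_injective.injOn, g (a :: t) := by
  classical
  have hsplit : ∀ a, ∑ t ∈ S.preimage (a :: ·) List.cons_injective.injOn, g (a :: t) =
      ∑ w ∈ S, if w.head? = some a then g w else 0 := fun a => by
    rw [← Finset.sum_preimage (a :: ·) S List.cons_injective.injOn]
    · simp
    · rintro (_ | ⟨b, t⟩) - hw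
      · simp
      · simp only [List.head?_cons, Option.some.injEq, ite_eq_right_iff]
        rintro rfl
        exact absurd ⟨t, rfl⟩ hw
  simp only [hsplit]
  rw [Finset.sum_comm]
  refine Finset.sum_congr rfl fun w hw => ?_
  obtain ⟨b, t, rfl⟩ := List.exists_cons_of_ne_nil (ne_of_mem_of_not_mem hw hS)
  simp

lemma sum_wt_le_one_of_prefixFree {p : ℝ} (hp0 : 0 ≤ p) (hp1 : p ≤ 1) (S : Finset (List Bool))
    (hS : ∀ v ∈ S, ∀ w ∈ S, v <+: w → v = w) : ∑ w ∈ S, wt p w ≤ 1 := by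
  suffices ∀ n, ∀ S : Finset (List Bool), (∀ w ∈ S, w.length ≤ n) →
      (∀ v ∈ S, ∀ w ∈ S, v <+: w → v = w) → ∑ w ∈ S, wt p w ≤ 1 from
    this _ S (fun w hw => Finset.le_sup (f := List.length) hw) hS
  intro n
  induction n with
  | zero =>
    intro S hlen _
    calc ∑ w ∈ S, wt p w ≤ ∑ w ∈ {[]}, wt p w :=
          Finset.sum_le_sum_of_subset_of_nonneg
            (fun w hw => by simpa using List.eq_nil_of_length_eq_zero (Nat.le_zero.1 (hlen w hw)))
            fun w _ _ => wt_nonneg hp0 hp1 w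
      _ = 1 := by simp
  | succ n ih =>
    intro S hlen hS
    by_cases hnil : [] ∈ S
    · have : S = {[]} := Finset.eq_singleton_iff_unique_mem.2
        ⟨hnil, fun w hw => (hS [] hnil w hw List.nil_prefix).symm⟩
      simp [this]
    have htail : ∀ b, ∑ t ∈ S.preimage (b :: ·) List.cons_injective.injOn, wt p t ≤ 1 :=
      fun b => ih _ (fun t ht => by simpa using hlen _ (Finset.mem_preimage.1 ht))
        fun v hv w hw hvw => List.cons_injective (hS _ (Finset.mem_preimage.1 hv) _
          (Finset.mem_preimage.1 hw) (List.cons_prefix_cons.2 ⟨rfl, hvw⟩))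
    rw [Finset.sum_eq_sum_preimage_cons S hnil, Fintype.sum_bool]
    simp only [wt_cons, ite_true, Bool.false_eq_true, ite_false, ← Finset.mul_sum]
    nlinarith [htail true, htail false]

section Prob

variable {N : ℕ} {p : ℝ} {x : ℤ}

lemma sum_indicator_isExitPath_le_one (hp0 : 0 ≤ p) (hp1 : p ≤ 1) (S : List Bool → Prop)
    (u : Finset (List Bool)) :
    ∑ w ∈ u, Set.indicator {w | IsExitPath N x w ∧ S w} (wt p) w ≤ 1 := by
  classical
  rw [Finset.sum_indicator_eq_sum_filter]
  refine sum_wt_le_one_of_prefixFree hp0 hp1 _ fun v hv w hw => ?_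
  simp only [Finset.mem_filter, Set.mem_ofPred_eq] at hv hw
  exact hv.2.1.eq_of_prefix hw.2.1

lemma summable_indicator_isExitPath (hp0 : 0 ≤ p) (hp1 : p ≤ 1) (S : List Bool → Prop) :
    Summable (Set.indicator {w | IsExitPath N x w ∧ S w} (wt p)) :=
  summable_of_sum_le (Set.indicator_nonneg fun w _ => wt_nonneg hp0 hp1 w)
    (sum_indicator_isExitPath_le_one hp0 hp1 S)

lemma prob_nonneg (hp0 : 0 ≤ p) (hp1 : p ≤ 1) (S : List Bool → Prop) : 0 ≤ prob N p x S :=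
  tsum_nonneg (Set.indicator_nonneg fun w _ => wt_nonneg hp0 hp1 w)

lemma prob_le_one (hp0 : 0 ≤ p) (hp1 : p ≤ 1) (S : List Bool → Prop) : prob N p x S ≤ 1 :=
  (summable_indicator_isExitPath hp0 hp1 S).tsum_le_of_sum_le
    (sum_indicator_isExitPath_le_one hp0 hp1 S)

open Classical in
lemma prob_of_boundary (hx : x = 0 ∨ x = N) (S : List Bool → Prop) :
    prob N p x S = if S [] then 1 else 0 := by
  rw [prob, tsum_eq_single []]
  · by_cases hS : S [] <;> simp [hS, isExitPath_nil.2 hx]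
  · rintro (_ | ⟨b, w⟩) hw
    · exact absurd rfl hw
    · refine Set.indicator_of_notMem (fun h => ?_) _
      have := h.1.interior
      omega

lemma prob_eq_first_step (hp0 : 0 ≤ p) (hp1 : p ≤ 1) (hx0 : 0 < x) (hxN : x < N)
    (S : List Bool → Prop) :
    prob N p x S = p * prob N p (x + 1) (fun w => S (true :: w))
      + (1 - p) * prob N p (x - 1) (fun w => S (false :: w)) := by
  set f := Set.indicator {w | IsExitPath N x w ∧ S w} (wt p)
  have hcons : Function.Injective fun bw : Bool × List Bool => bw.1 :: bw.2 :=
    fun ⟨_, _⟩ ⟨_, _⟩ h => by simp_all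
  have hsupp : Function.support f ⊆ Set.range fun bw : Bool × List Bool => bw.1 :: bw.2 := by
    rintro (_ | ⟨b, w⟩) hw
    · refine absurd (Set.indicator_of_notMem (fun h => ?_) _) hw
      rcases isExitPath_nil.1 h.1 with h | h <;> omega
    · exact ⟨(b, w), rfl⟩
  have hstep : ∀ b w, f (b :: w) = (if b then p else 1 - p) *
      Set.indicator {w | IsExitPath N (if b then x + 1 else x - 1) w ∧ S (b :: w)} (wt p) w := by
    intro b w
    have hmem : b :: w ∈ {w | IsExitPath N x w ∧ S w} ↔
        w ∈ {w | IsExitPath N (if b then x + 1 else x - 1) w ∧ S (b :: w)} :=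
      and_congr_left' (isExitPath_cons hx0 hxN b w)
    by_cases h : w ∈ {w | IsExitPath N (if b then x + 1 else x - 1) w ∧ S (b :: w)}
    · rw [show f (b :: w) = wt p (b :: w) from Set.indicator_of_mem (hmem.2 h) _,
        Set.indicator_of_mem h, wt_cons]
    · rw [show f (b :: w) = 0 from Set.indicator_of_notMem (mt hmem.1 h) _,
        Set.indicator_of_notMem h, mul_zero]
  rw [prob, ← hcons.tsum_eq hsupp, Summable.tsum_prod (f := fun bw => f (bw.1 :: bw.2))
    ((summable_indicator_isExitPath hp0 hp1 S).comp_injective hcons), tsum_bool]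
  simp only [hstep, tsum_mul_left, ite_true, Bool.false_eq_true, ite_false, prob]
  ring

end Prob

lemma harmonic_interpolation {p q : ℝ} (hp : p ≠ 0) (hpq : p + q = 1) {f : ℕ → ℝ} {m : ℕ}
    (hf : ∀ n, n + 1 < m → f (n + 1) = p * f (n + 2) + q * f n) {n : ℕ} (hn : n ≤ m) :
    (f n - f 0) * ((q / p) ^ m - 1) = (f m - f 0) * ((q / p) ^ n - 1) := by
  have hincr : ∀ j < m, f (j + 1) - f j = (q / p) ^ j * (f 1 - f 0) := by
    intro j hj
    induction j with
    | zero => simp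
    | succ j ih =>
      have hstep : f (j + 2) - f (j + 1) = q / p * (f (j + 1) - f j) := by
        rw [div_mul_eq_mul_div, eq_div_iff hp]
        linear_combination (-1 : ℝ) * hf j hj - f (j + 1) * hpq
      rw [hstep, ih (by omega)]
      ring
  have hsum : ∀ j ≤ m, f j - f 0 = (∑ i ∈ Finset.range j, (q / p) ^ i) * (f 1 - f 0) := by
    intro j hj
    induction j with
    | zero => simp
    | succ j ih =>
      rw [Finset.sum_range_succ, add_mul, ← ih (by omega), ← hincr j (by omega)]
      ring
  rw [hsum n hn, hsum m le_rfl, ← geom_sum_mul, ← geom_sum_mul]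
  ring

section Parity

variable {ι α : Type*} {N : ℕ} {p : ℝ}

def toggle [DecidableEq α] (Y : ι → α) (x : α) (ε : ι → Bool) : ι → Bool :=
  fun i => decide (Y i = x) ^^ ε i

@[simp] lemma toggle_toggle [DecidableEq α] (Y : ι → α) (x : α) (ε : ι → Bool) :
    toggle Y x (toggle Y x ε) = ε := by
  funext i
  simp [toggle]

lemma toggle_of_forall_ne [DecidableEq α] {Y : ι → α} {x : α} (h : ∀ i, Y i ≠ x)
    (ε : ι → Bool) : toggle Y x ε = ε := by
  funext i
  simp [toggle, h i]

noncomputable def parityProb (N : ℕ) (p : ℝ) (Y : ι → ℤ) (x : ℤ) (ε : ι → Bool) : ℝ :=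
  prob N p x fun w => ∀ i, (localTime x (Y i) w).bodd = ε i

variable {Y : ι → ℤ} {x : ℤ} {ε : ι → Bool}

lemma parityProb_nonneg (hp0 : 0 ≤ p) (hp1 : p ≤ 1) : 0 ≤ parityProb N p Y x ε :=
  prob_nonneg hp0 hp1 _

lemma parityProb_le_one (hp0 : 0 ≤ p) (hp1 : p ≤ 1) : parityProb N p Y x ε ≤ 1 :=
  prob_le_one hp0 hp1 _

lemma abs_parityProb_sub_le_one (hp0 : 0 ≤ p) (hp1 : p ≤ 1) (x' : ℤ) (ε' : ι → Bool) :
    |parityProb N p Y x ε - parityProb N p Y x' ε'| ≤ 1 :=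
  abs_sub_le_of_nonneg_of_le (parityProb_nonneg hp0 hp1) (parityProb_le_one hp0 hp1)
    (parityProb_nonneg hp0 hp1) (parityProb_le_one hp0 hp1)

open Classical in
lemma parityProb_of_boundary (hx : x = 0 ∨ x = N) (hY : ∀ i, Y i ≠ x) :
    parityProb N p Y x ε = if ∀ i, ε i = false then 1 else 0 := by
  rw [parityProb, prob_of_boundary hx]
  have hne : ∀ i, x ≠ Y i := fun i => (hY i).symm
  simp only [localTime_nil, hne, if_false, Nat.bodd_zero]
  simp only [eq_comm]

lemma parityProb_eq_first_step (hp0 : 0 ≤ p) (hp1 : p ≤ 1) (hx0 : 0 < x) (hxN : x < N) :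
    parityProb N p Y x ε = p * parityProb N p Y (x + 1) (toggle Y x ε)
      + (1 - p) * parityProb N p Y (x - 1) (toggle Y x ε) := by
  have hevent : ∀ b w, (∀ i, (localTime x (Y i) (b :: w)).bodd = ε i) ↔
      ∀ i, (localTime (if b then x + 1 else x - 1) (Y i) w).bodd = toggle Y x ε i := by
    refine fun b w => forall_congr' fun i => ?_
    rw [localTime_cons, Nat.bodd_add, toggle]
    by_cases h : x = Y i <;> simp [h, eq_comm]
  rw [parityProb, prob_eq_first_step hp0 hp1 hx0 hxN]
  simp only [hevent, ite_true, Bool.false_eq_true, ite_false, parityProb]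

lemma parityProb_interpolation (hp0 : 0 < p) (hp1 : p ≤ 1) {a : ℤ} {m : ℕ}
    (hfree : ∀ z, a < z → z < a + m → 0 < z ∧ z < N ∧ ∀ i, Y i ≠ z) {n : ℕ} (hn : n ≤ m) :
    (parityProb N p Y (a + n) ε - parityProb N p Y a ε) * (((1 - p) / p) ^ m - 1) =
      (parityProb N p Y (a + m) ε - parityProb N p Y a ε) * (((1 - p) / p) ^ n - 1) := by
  have := harmonic_interpolation (f := fun n : ℕ => parityProb N p Y (a + n) ε) hp0.ne'
    (add_sub_cancel p 1) (fun j hj => ?_) hn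
  · simpa using this
  obtain ⟨hz0, hzN, hY⟩ := hfree (a + (j + 1 : ℕ)) (by omega) (by omega)
  rw [parityProb_eq_first_step hp0.le hp1 hz0 hzN, toggle_of_forall_ne hY]
  push_cast
  ring_nf

section Limits

variable {β : Type*} {l : Filter β}

lemma tendsto_of_tendsto_sub_involution {γ : Type*} {σ : γ → γ} (hσ : Function.Involutive σ)
    {a b : ℝ} (ha : a ^ 2 ≠ 1) {V U : β → γ → ℝ} {U₀ : γ → ℝ}
    (hU : ∀ x, Tendsto (fun n => U n x) l (𝓝 (U₀ x)))
    (hV : ∀ x, Tendsto (fun n => V n x - a * V n (σ x) - b * U n (σ x)) l (𝓝 0)) (x : γ) :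
    Tendsto (fun n => V n x) l (𝓝 ((a * b * U₀ x + b * U₀ (σ x)) / (1 - a ^ 2))) := by
  have ha' : 1 - a ^ 2 ≠ 0 := sub_ne_zero.2 (Ne.symm ha)
  have hsolve : ∀ n, V n x = ((V n x - a * V n (σ x) - b * U n (σ x))
      + a * (V n (σ x) - a * V n (σ (σ x)) - b * U n (σ (σ x)))
      + a * b * U n x + b * U n (σ x)) / (1 - a ^ 2) := fun n => by
    rw [hσ x, eq_div_iff ha']
    ring
  refine Tendsto.congr (fun n => (hsolve n).symm) ?_
  convert ((((hV x).add ((hV (σ x)).const_mul a)).add ((hU x).const_mul (a * b))).add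
    ((hU (σ x)).const_mul b)).div_const (1 - a ^ 2) using 2
  ring

lemma tendsto_mul_sub_of_abs_le_one {f c : β → ℝ} {c₀ : ℝ} (hf : ∀ n, |f n| ≤ 1)
    (hc : Tendsto c l (𝓝 c₀)) : Tendsto (fun n => f n * (c n - c₀)) l (𝓝 0) := by
  refine squeeze_zero_norm (fun n => ?_) (by simpa using (tendsto_sub_nhds_zero_iff.2 hc).abs)
  rw [Real.norm_eq_abs, abs_mul]
  exact mul_le_of_le_one_left (abs_nonneg _) (hf n)

lemma tendsto_pow_sub_one_div_pow_sub_one {r ρ : ℝ} (hr0 : 0 ≤ r) (hr1 : r < 1) {n m : β → ℕ}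
    (hn : Tendsto (fun N => r ^ n N) l (𝓝 ρ)) (hm : Tendsto m l atTop) :
    Tendsto (fun N => (r ^ n N - 1) / (r ^ m N - 1)) l (𝓝 (1 - ρ)) := by
  rw [show 1 - ρ = (ρ - 1) / (0 - 1) by ring]
  exact (hn.sub_const 1).div
    (((tendsto_pow_atTop_nhds_zero_of_lt_one hr0 hr1).comp hm).sub_const 1) (by norm_num)

end Limits

/-- Started from the `i`-th site, the sites below it are asymptotically never visited, and the
others carry independent parities, each odd with probability `c`. -/
noncomputable def parityLimit (c : ℝ) {k : ℕ} (i : ℕ) (ε : Fin k → Bool) : ℝ :=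
  ∏ j : Fin k, if (j : ℕ) < i then (if ε j then 0 else 1) else (if ε j then c else 1 - c)

section ParityLimit

variable {c : ℝ} {k : ℕ}

lemma parityLimit_zero_const_true : parityLimit c 0 (fun _ : Fin k => true) = c ^ k := by
  simp [parityLimit]

open Classical in
lemma parityLimit_self (ε : Fin k → Bool) :
    parityLimit c k ε = if ∀ j, ε j = false then 1 else 0 := by
  simp only [parityLimit, Fin.is_lt, if_true]
  split_ifs with h
  · simp [h]
  · obtain ⟨j, hj⟩ := not_forall.1 h
    exact Finset.prod_eq_zero (Finset.mem_univ j) (by simpa using hj)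

lemma parityLimit_succ {a : ℝ} (ha : 1 + a ≠ 0) (hc : c = 1 / (1 + a)) {i : ℕ} (hi : i < k)
    (ε : Fin k → Bool) :
    (a * parityLimit c (i + 1) ε + parityLimit c (i + 1) (toggle Fin.val i ε)) / (1 + a) =
      parityLimit c i ε := by
  set i' : Fin k := ⟨i, hi⟩
  have hfactor : ∀ δ ∈ ({ε, toggle Fin.val i ε} : Set _), ∀ t ∈ ({i, i + 1} : Set ℕ),
      parityLimit c t δ = (if i < t then (if δ i' then 0 else 1) else (if δ i' then c else 1 - c)) *
        ∏ j ∈ {i'}ᶜ,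
          (if (j : ℕ) < i then (if ε j then 0 else 1) else (if ε j then c else 1 - c)) := by
    intro δ hδ t ht
    rw [parityLimit, Fintype.prod_eq_mul_prod_compl i']
    refine congrArg _ (Finset.prod_congr rfl fun j hj => ?_)
    have hji : (j : ℕ) ≠ i := fun h => by simp [i', Fin.ext_iff, h] at hj
    have hδj : δ j = ε j := by rcases hδ with rfl | rfl <;> simp [toggle, hji]
    have htj : (j : ℕ) < t ↔ (j : ℕ) < i := by rcases ht with rfl | rfl <;> omega
    simp only [hδj, htj]
  have hσ : toggle Fin.val i ε i' = !ε i' := by simp [toggle, i']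
  rw [hfactor ε (by simp) (i + 1) (by simp), hfactor _ (by simp) (i + 1) (by simp),
    hfactor ε (by simp) i (by simp), hσ]
  subst hc
  cases ε i' <;>
    simp only [Bool.not_false, Bool.not_true, Bool.false_eq_true, ite_true, ite_false, lt_add_one,
      lt_irrefl] <;>
    field_simp <;> ring

end ParityLimit

/-- The sites of a chain `0 = pos 0 < pos 1 < ⋯ < pos (k + 1) = N`, whose ends are the boundary. -/
def chainSites (pos : ℕ → ℕ) (k : ℕ) : Fin k → ℤ := fun j => (pos (j + 1) : ℤ)

section Chain

variable {N k : ℕ} {pos : ℕ → ℕ} {p q : ℝ}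

lemma chain_gap_interior (hpos : StrictMonoOn pos (Set.Iic (k + 1))) (hposN : pos (k + 1) = N)
    {i : ℕ} (hi : i ≤ k) (z : ℤ) (hz : pos i < z) (hz' : z < pos (i + 1)) :
    0 < z ∧ z < N ∧ ∀ j, chainSites pos k j ≠ z := by
  have hmem : ∀ {m}, m ≤ k + 1 → m ∈ Set.Iic (k + 1) := id
  refine ⟨by omega, ?_, fun j hj => ?_⟩
  · have := hpos.monotoneOn (hmem (by omega)) (hmem le_rfl) (by omega : i + 1 ≤ k + 1)
    omega
  · have h1 := (hpos.lt_iff_lt (hmem (by omega)) (hmem (by omega))).1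
      (show pos i < pos (j + 1) by simp only [chainSites] at hj; omega)
    have h2 := (hpos.lt_iff_lt (hmem (by omega)) (hmem (by omega))).1
      (show pos (j + 1) < pos (i + 1) by simp only [chainSites] at hj; omega)
    omega

variable (hq : 0 < q) (hpq : q < p) (hsum : p + q = 1)
include hq hpq hsum

local notation "𝔥" => parityProb N p (chainSites pos k)

lemma chain_interpolation (hpos : StrictMonoOn pos (Set.Iic (k + 1))) (hposN : pos (k + 1) = N)
    {i : ℕ} (hi : i ≤ k) (ε : Fin k → Bool) {n : ℕ} (hn : n ≤ pos (i + 1) - pos i) :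
    𝔥 (pos i + n) ε = 𝔥 (pos i) ε + (𝔥 (pos (i + 1)) ε - 𝔥 (pos i) ε) *
      (((q / p) ^ n - 1) / ((q / p) ^ (pos (i + 1) - pos i) - 1)) := by
  have hgap : pos i < pos (i + 1) := hpos (by simp; omega) (by simp; omega) (by omega)
  have hend : ((pos i : ℕ) : ℤ) + ((pos (i + 1) - pos i : ℕ) : ℤ) = pos (i + 1) := by omega
  have hr : (q / p) ^ (pos (i + 1) - pos i) - 1 ≠ 0 := sub_ne_zero.2
    (pow_lt_one₀ (div_pos hq (by linarith)).le ((div_lt_one (by linarith)).2 hpq) (by omega)).ne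
  have h := parityProb_interpolation (ε := ε) (by linarith) (by linarith) (a := pos i)
    (fun z hz hz' => chain_gap_interior hpos hposN hi z hz (by omega)) hn
  rw [hend, show 1 - p = q by linarith] at h
  rw [mul_div_assoc', ← sub_eq_iff_eq_add', eq_div_iff hr]
  exact h

lemma chain_site_eq (hpos : StrictMonoOn pos (Set.Iic (k + 1))) (hpos0 : pos 0 = 0)
    (hposN : pos (k + 1) = N) {i : ℕ} (hi : i < k) (ε : Fin k → Bool) :
    𝔥 (pos (i + 1)) ε =
      p * (𝔥 (pos (i + 1)) (toggle Fin.val i ε) +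
          (𝔥 (pos (i + 2)) (toggle Fin.val i ε) - 𝔥 (pos (i + 1)) (toggle Fin.val i ε)) *
            ((q / p - 1) / ((q / p) ^ (pos (i + 2) - pos (i + 1)) - 1))) +
      q * (𝔥 (pos i) (toggle Fin.val i ε) +
          (𝔥 (pos (i + 1)) (toggle Fin.val i ε) - 𝔥 (pos i) (toggle Fin.val i ε)) *
            (((q / p) ^ (pos (i + 1) - pos i - 1) - 1) /
              ((q / p) ^ (pos (i + 1) - pos i) - 1))) := by
  have hmem : ∀ {m}, m ≤ k + 1 → m ∈ Set.Iic (k + 1) := id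
  have hlo : pos i < pos (i + 1) := hpos (hmem (by omega)) (hmem (by omega)) (by omega)
  have hx0 : 0 < pos (i + 1) := hpos0 ▸ hpos (hmem (by omega)) (hmem (by omega)) (by omega)
  have hxN : pos (i + 1) < N := hposN ▸ hpos (hmem (by omega)) (hmem le_rfl) (by omega)
  have htoggle : toggle (chainSites pos k) (pos (i + 1)) ε = toggle Fin.val i ε := by
    funext j
    have : pos (j + 1) = pos (i + 1) ↔ (j : ℕ) = i :=
      (hpos.injOn.eq_iff (hmem (by omega)) (hmem (by omega))).trans (by omega)
    simp [toggle, chainSites, this]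
  have hhi : pos (i + 1) < pos (i + 1 + 1) := hpos (hmem (by omega)) (hmem (by omega)) (by omega)
  have hup := chain_interpolation hq hpq hsum hpos hposN (i := i + 1) (by omega)
    (toggle Fin.val i ε) (n := 1) (by omega)
  rw [show i + 1 + 1 = i + 2 from rfl, Nat.cast_one, pow_one] at hup
  have hdown := chain_interpolation hq hpq hsum hpos hposN (i := i) (by omega)
    (toggle Fin.val i ε) (n := pos (i + 1) - pos i - 1) (by omega)
  rw [show ((pos i : ℕ) : ℤ) + ((pos (i + 1) - pos i - 1 : ℕ) : ℤ) = pos (i + 1) - 1 by omega]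
    at hdown
  rw [parityProb_eq_first_step (by linarith) (by linarith) (by omega) (by omega), htoggle,
    show 1 - p = q by linarith, hup, hdown]

end Chain

section ChainLimit

variable {k : ℕ} {pos : ℕ → ℕ → ℕ} {p q : ℝ}

lemma eventually_strictMonoOn_chain
    (hgap : ∀ i ≤ k, Tendsto (fun N => pos N (i + 1) - pos N i) atTop atTop) :
    ∀ᶠ N in atTop, StrictMonoOn (pos N) (Set.Iic (k + 1)) := by
  have : ∀ᶠ N in atTop, ∀ i ∈ Finset.range (k + 1), pos N i < pos N (i + 1) :=
    (Filter.eventually_all_finset _).2 fun i hi =>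
      ((hgap i (by simp at hi; omega)).eventually_ge_atTop 1).mono fun N h => by omega
  filter_upwards [this] with N hN
  exact strictMonoOn_Iic_of_lt_succ fun m hm => by simpa using hN m (by simpa using hm)

variable (hq : 0 < q) (hpq : q < p) (hsum : p + q = 1) (hpos0 : ∀ N, pos N 0 = 0)
  (hposN : ∀ N, pos N (k + 1) = N)
  (hgap : ∀ i ≤ k, Tendsto (fun N => pos N (i + 1) - pos N i) atTop atTop)
include hq hpq hsum hpos0 hposN hgap

lemma tendsto_chain_site_error {i : ℕ} (hi : i < k) (ε : Fin k → Bool) :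
    Tendsto (fun N => parityProb N p (chainSites (pos N) k) (pos N (i + 1)) ε
      - 2 * q * parityProb N p (chainSites (pos N) k) (pos N (i + 1)) (toggle Fin.val i ε)
      - (p - q) * parityProb N p (chainSites (pos N) k) (pos N (i + 2)) (toggle Fin.val i ε))
      atTop (𝓝 0) := by
  have hp0 : 0 < p := hq.trans hpq
  have hr0 : 0 ≤ q / p := (div_pos hq hp0).le
  have hr1 : q / p < 1 := (div_lt_one hp0).2 hpq
  have hpr : p * (q / p) = q := mul_div_cancel₀ q hp0.ne'
  have hU := tendsto_pow_sub_one_div_pow_sub_one hr0 hr1 (n := fun _ => 1) (ρ := q / p) (by simp)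
    (hgap (i + 1) (by omega))
  have hL := tendsto_pow_sub_one_div_pow_sub_one hr0 hr1
    ((tendsto_pow_atTop_nhds_zero_of_lt_one hr0 hr1).comp
      ((tendsto_sub_atTop_nat 1).comp (hgap i (by omega)))) (hgap i (by omega))
  have hbound := fun N x y δ => abs_parityProb_sub_le_one (N := N) (Y := chainSites (pos N) k)
    (x := x) (ε := δ) hp0.le (by linarith) y δ
  have hlim := ((tendsto_mul_sub_of_abs_le_one (fun N => hbound N (pos N (i + 2)) (pos N (i + 1))
    (toggle Fin.val i ε)) hU).const_mul p).add
    ((tendsto_mul_sub_of_abs_le_one (fun N => hbound N (pos N (i + 1)) (pos N i)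
      (toggle Fin.val i ε)) hL).const_mul q)
  simp only [mul_zero, add_zero, pow_one, sub_zero, Function.comp_def] at hlim
  refine hlim.congr' ?_
  filter_upwards [eventually_strictMonoOn_chain hgap] with N hN
  rw [chain_site_eq hq hpq hsum hN (hpos0 N) (hposN N) hi ε]
  linear_combination (parityProb N p (chainSites (pos N) k) (pos N (i + 2)) (toggle Fin.val i ε) -
    parityProb N p (chainSites (pos N) k) (pos N (i + 1)) (toggle Fin.val i ε)) * hpr

lemma tendsto_parityProb_chain_site {i : ℕ} (hi : i ≤ k) (ε : Fin k → Bool) :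
    Tendsto (fun N => parityProb N p (chainSites (pos N) k) (pos N (i + 1)) ε) atTop
      (𝓝 (parityLimit (1 / (1 + 2 * q)) i ε)) := by
  induction hi using Nat.decreasingInduction generalizing ε with
  | self =>
    refine tendsto_const_nhds.congr' ?_
    filter_upwards [eventually_strictMonoOn_chain hgap] with N hN
    have hsites : ∀ j, chainSites (pos N) k j ≠ N := fun j => by
      have := hposN N
      have := hN (show (j : ℕ) + 1 ∈ Set.Iic (k + 1) by simp only [Set.mem_Iic]; omega)
        Set.self_mem_Iic (by omega)
      simp only [chainSites, ne_eq]
      omega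
    rw [hposN N, parityProb_of_boundary (Or.inr rfl) hsites, parityLimit_self]
    congr 1
  | of_succ i hi ih =>
    have h2q : 1 + 2 * q ≠ 0 := by linarith
    have h2q' : 1 - 2 * q ≠ 0 := by linarith
    have := tendsto_of_tendsto_sub_involution (σ := toggle Fin.val i) (toggle_toggle _ _)
      (a := 2 * q) (b := p - q) (by nlinarith) (U := fun N δ =>
        parityProb N p (chainSites (pos N) k) (pos N (i + 2)) δ) ih
      (tendsto_chain_site_error hq hpq hsum hpos0 hposN hgap hi) ε
    rw [← parityLimit_succ h2q rfl hi]
    convert this using 2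
    rw [show p - q = 1 - 2 * q by linarith,
      show 1 - (2 * q) ^ 2 = (1 - 2 * q) * (1 + 2 * q) by ring]
    field_simp

theorem tendsto_parityProb_chain {X : ℕ → ℕ} (hX : Tendsto X atTop atTop)
    (hX1 : ∀ N, X N ≤ pos N 1) (ε : Fin k → Bool) :
    Tendsto (fun N => parityProb N p (chainSites (pos N) k) (X N) ε) atTop
      (𝓝 (parityLimit (1 / (1 + 2 * q)) 0 ε)) := by
  have hp0 : 0 < p := hq.trans hpq
  have hr0 : 0 ≤ q / p := (div_pos hq hp0).le
  have hr1 : q / p < 1 := (div_lt_one hp0).2 hpq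
  have hcoef := tendsto_pow_sub_one_div_pow_sub_one hr0 hr1
    ((tendsto_pow_atTop_nhds_zero_of_lt_one hr0 hr1).comp hX) (hgap 0 (Nat.zero_le k))
  rw [sub_zero] at hcoef
  have hlim := (tendsto_parityProb_chain_site hq hpq hsum hpos0 hposN hgap (Nat.zero_le k) ε).add
    (tendsto_mul_sub_of_abs_le_one (fun N => abs_parityProb_sub_le_one (N := N)
      (Y := chainSites (pos N) k) (x := pos N 1) (ε := ε) hp0.le (by linarith) (pos N 0) ε) hcoef)
  rw [add_zero] at hlim
  refine hlim.congr' ?_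
  filter_upwards [eventually_strictMonoOn_chain hgap] with N hN
  have := chain_interpolation hq hpq hsum hN (hposN N) (Nat.zero_le k) ε (n := X N)
    (by simpa [hpos0 N] using hX1 N)
  rw [show ((pos N 0 : ℕ) : ℤ) + (X N : ℕ) = X N by simp [hpos0 N]] at this
  rw [this]
  ring

end ChainLimit

lemma tendsto_natFloor_mul_sub_natFloor_mul {β γ : ℝ} (hβ : 0 ≤ β) (hβγ : β < γ) :
    Tendsto (fun N : ℕ => ⌊γ * N⌋₊ - ⌊β * N⌋₊) atTop atTop := by
  refine tendsto_atTop.2 fun b => ?_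
  have hlin : Tendsto (fun N : ℕ => (γ - β) * N) atTop atTop :=
    tendsto_natCast_atTop_atTop.const_mul_atTop (sub_pos.2 hβγ)
  filter_upwards [hlin.eventually_ge_atTop b] with N hN
  have hfloor := Nat.floor_le (mul_nonneg hβ N.cast_nonneg)
  have : ⌊β * N⌋₊ + b ≤ ⌊γ * N⌋₊ := Nat.le_floor (by push_cast; linarith)
  omega

noncomputable def chainFractions {k : ℕ} (a : Fin k → ℝ) (i : ℕ) : ℝ :=
  if i = 0 then 0 else if h : i - 1 < k then a ⟨i - 1, h⟩ else 1

section ChainFractions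

variable {k : ℕ} {a : Fin k → ℝ}

@[simp] lemma chainFractions_zero : chainFractions a 0 = 0 := rfl

@[simp] lemma chainFractions_last : chainFractions a (k + 1) = 1 := by simp [chainFractions]

lemma chainFractions_succ {j : ℕ} (hj : j < k) : chainFractions a (j + 1) = a ⟨j, hj⟩ := by
  simp [chainFractions, hj]

lemma chainFractions_nonneg (ha0 : ∀ j, 0 < a j) (i : ℕ) : 0 ≤ chainFractions a i := by
  unfold chainFractions
  split_ifs
  exacts [le_rfl, (ha0 _).le, zero_le_one]

lemma chainFractions_lt_succ (ha : StrictMono a) (ha0 : ∀ j, 0 < a j) (ha1 : ∀ j, a j < 1)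
    {i : ℕ} (hi : i ≤ k) : chainFractions a i < chainFractions a (i + 1) := by
  obtain rfl | hik := hi.eq_or_lt
  · rw [chainFractions_last]
    rcases i with _ | j
    · simp
    · rw [chainFractions_succ (Nat.lt_succ_self j)]
      exact ha1 _
  · rw [chainFractions_succ hik]
    rcases i with _ | j
    · exact ha0 _
    · rw [chainFractions_succ (by omega)]
      exact ha (Fin.mk_lt_mk.2 (by omega))

end ChainFractions

/-- Proposition 4.2: for the asymmetric walk with fixed `0 < q < p`, `p + q = 1`,
started at `⌊αN⌋` with `α < α_1 < ⋯ < α_k`, the probability that every site `⌊α_i N⌋`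
is visited an odd number of times before exit tends to `(2 - (p - q))^{-k}`. -/
theorem parity_iid_asymmetric (p q : ℝ) (hq : 0 < q) (hpq : q < p) (hsum : p + q = 1)
    (k : ℕ) (hk : 1 ≤ k) (α : ℝ) (a : Fin k → ℝ) (hmono : StrictMono a)
    (hα0 : 0 < α) (hαa : ∀ i, α < a i) (ha1 : ∀ i, a i < 1) :
    Tendsto (fun N : ℕ =>
        prob N p ⌊α * (N : ℝ)⌋
          fun w => ∀ i, localTime ⌊α * (N : ℝ)⌋ ⌊a i * (N : ℝ)⌋ w % 2 = 1)
      atTop (𝓝 (1 / (2 - (p - q)) ^ k)) := by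
  have ha0 : ∀ i, 0 < a i := fun i => hα0.trans (hαa i)
  have hX1 : ∀ N : ℕ, ⌊α * N⌋₊ ≤ ⌊chainFractions a 1 * N⌋₊ := fun N =>
    Nat.floor_le_floor (by
      simpa [chainFractions_succ hk] using mul_le_mul_of_nonneg_right (hαa _).le N.cast_nonneg)
  have key := tendsto_parityProb_chain hq hpq hsum (pos := fun N i => ⌊chainFractions a i * N⌋₊)
    (by simp) (by simp)
    (fun i hi => tendsto_natFloor_mul_sub_natFloor_mul (chainFractions_nonneg ha0 i)
      (chainFractions_lt_succ hmono ha0 ha1 hi))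
    (X := fun N => ⌊α * N⌋₊) (by simpa using tendsto_natFloor_mul_sub_natFloor_mul le_rfl hα0)
    hX1 (fun _ => true)
  rw [parityLimit_zero_const_true, show 1 + 2 * q = 2 - (p - q) by linarith, one_div_pow] at key
  refine key.congr fun N => ?_
  have hcast : ∀ {b : ℝ}, 0 ≤ b → ((⌊b * N⌋₊ : ℕ) : ℤ) = ⌊b * N⌋ := fun hb =>
    Int.natCast_floor_eq_floor (mul_nonneg hb N.cast_nonneg)
  simp only [parityProb, chainSites, fun i : Fin k => chainFractions_succ (a := a) i.isLt,
    hcast hα0.le, fun i => hcast (ha0 i).le,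
    Nat.mod_two_of_bodd, Bool.toNat_eq_one]
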